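/- arXiv:2211.12319 — 7 statements merged into one kernel-verified Lean document; each statement's English description precedes it below -/
import Mathlib

section
/- Let K be an infinite field of characteristic not 2. For a ∈ K, define the 2×2 matrix M_a = [[1, a], [-a, 1]]. If there exists an invertible 2×2 matrix g over K with g M_a gᵀ = M_b, then a² = b². Consequently, the matrices M_a for a ranging over a set of elements with pairwise distinct squares are pairwise incomparable under the restriction order S ⪰ T (meaning T = φ S φᵀ for some linear map φ), so restriction on 2-way tensors over an infinite field admits infinite antichains. -/
open Matrix

/-- For `a` in a field `K`, the matrix `M_a = [[1, a], [-a, 1]]`. -/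
def Mmat {K : Type} [Field K] (a : K) : Matrix (Fin 2) (Fin 2) K :=
  !![1, a; -a, 1]

lemma key_sq {K : Type} [Field K] (hchar : (2:K) ≠ 0) (a b : K)
    (φ : Matrix (Fin 2) (Fin 2) K) (h : φ * Mmat a * φᵀ = Mmat b) : a ^ 2 = b ^ 2 := by
  have h00 := congrFun (congrFun h 0) 0
  have h01 := congrFun (congrFun h 0) 1
  have h10 := congrFun (congrFun h 1) 0
  have h11 := congrFun (congrFun h 1) 1
  simp [Mmat, Matrix.mul_apply, Matrix.transpose_apply, Fin.sum_univ_two] at h00 h01 h10 h11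
  have hb : a * (φ 0 0 * φ 1 1 - φ 0 1 * φ 1 0) = b :=
    mul_left_cancel₀ hchar (by linear_combination h01 - h10)
  have hS : φ 0 0 * φ 1 0 + φ 0 1 * φ 1 1 = 0 :=
    mul_left_cancel₀ hchar (by linear_combination h01 + h10)
  linear_combination (a * (φ 0 0 * φ 1 1 - φ 0 1 * φ 1 0) + b) * hb
    + (-a^2 * (φ 1 0 ^ 2 + φ 1 1 ^ 2)) * h00 + (-a^2) * h11
    + (a^2 * (φ 0 0 * φ 1 0 + φ 0 1 * φ 1 1)) * hS

lemma sq_antichain {K : Type} [Field K] [Infinite K] :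
    ∃ S : Set K, S.Infinite ∧ ∀ a ∈ S, ∀ b ∈ S, a ≠ b → a ^ 2 ≠ b ^ 2 := by
  have fib : ∀ b : K, {x : K | x ^ 2 = b}.Finite := by
    intro b
    rcases em (∃ x : K, x ^ 2 = b) with ⟨x, hx⟩ | he
    · refine Set.Finite.subset ((Set.finite_singleton (-x)).insert x) ?_
      intro y hy
      simp only [Set.mem_setOf_eq] at hy
      have h0 : (y - x) * (y + x) = 0 := by linear_combination hy - hx
      rcases mul_eq_zero.1 h0 with h | h
      · left; exact sub_eq_zero.1 h
      · right; simp; linear_combination h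
    · convert Set.finite_empty
      ext y; simp only [Set.mem_setOf_eq, Set.mem_empty_iff_false, iff_false]
      exact fun hy => he ⟨y, hy⟩
  have hR : (Set.range (fun x : K => x ^ 2)).Infinite := by
    intro hfin
    have huniv : (Set.univ : Set K) ⊆ ⋃ b ∈ Set.range (fun x : K => x ^ 2), {x : K | x ^ 2 = b} := by
      intro x _
      exact Set.mem_biUnion ⟨x, rfl⟩ rfl
    exact Set.infinite_univ (Set.Finite.subset (hfin.biUnion fun b _ => fib b) huniv)
  classical
  set s : K → K := fun y => if h : ∃ x : K, x ^ 2 = y then h.choose else 0 with hs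
  have hsq : ∀ y ∈ Set.range (fun x : K => x ^ 2), (s y) ^ 2 = y := by
    rintro y ⟨x, hx⟩
    have hex : ∃ z : K, z ^ 2 = y := ⟨x, hx⟩
    simp only [hs, dif_pos hex]
    exact hex.choose_spec
  have hinj : Set.InjOn s (Set.range (fun x : K => x ^ 2)) := by
    intro y hy z hz hyz
    rw [← hsq y hy, ← hsq z hz, hyz]
  refine ⟨s '' Set.range (fun x : K => x ^ 2), hR.image hinj, ?_⟩
  rintro a ⟨y, hy, rfl⟩ b ⟨z, hz, rfl⟩ hne hab
  exact hne (congrArg s ((hsq y hy).symm.trans (hab.trans (hsq z hz))))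

/-- Over an infinite field of characteristic `≠ 2`: if `g M_a gᵀ = M_b` for some invertible
`g`, then `a² = b²`; consequently matrices `M_a` with pairwise distinct squares are pairwise
incomparable under the restriction order `S ⪰ T ⟺ ∃ φ, φ S φᵀ = T`, so restriction on 2-way
tensors over an infinite field admits infinite antichains. -/
theorem stmt1 (K : Type) [Field K] [Infinite K] (hchar : (2 : K) ≠ 0) :
    (∀ a b : K, (∃ g : Matrix (Fin 2) (Fin 2) K, IsUnit g ∧ g * Mmat a * gᵀ = Mmat b) →
      a ^ 2 = b ^ 2) ∧
    (∀ a b : K, a ^ 2 ≠ b ^ 2 →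
      (¬ ∃ φ : Matrix (Fin 2) (Fin 2) K, φ * Mmat a * φᵀ = Mmat b) ∧
      (¬ ∃ φ : Matrix (Fin 2) (Fin 2) K, φ * Mmat b * φᵀ = Mmat a)) ∧
    (∃ S : Set K, S.Infinite ∧ ∀ a ∈ S, ∀ b ∈ S, a ≠ b → a ^ 2 ≠ b ^ 2) := by
  refine ⟨fun a b ⟨g, _, hg⟩ => key_sq hchar a b g hg,
    fun a b hab => ⟨fun ⟨φ, hφ⟩ => hab (key_sq hchar a b φ hφ),
      fun ⟨φ, hφ⟩ => hab (key_sq hchar b a φ hφ).symm⟩,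
    sq_antichain⟩
end

section
/- Let K be a finite field and fix d ≥ 1. Suppose that for every finite-dimensional K-vector space U there are only finitely many tensors in U^⊗d up to restriction-equivalence, and suppose the following property (3) holds: for every restriction-closed tensor property X there exists a finite-dimensional vector space U such that for any V and any T ∈ V^⊗d, T satisfies X if and only if φ^⊗d T satisfies X (as element of U^⊗d) for all linear maps φ: V → U. Then the tensor restriction theorem holds: for any sequence T_i ∈ V_i^⊗d (i ∈ ℕ) there exist i < j such that T_i is a restriction of T_j. -/
open scoped TensorProduct

/-- The space of `d`-way tensors on `K^n`. -/
abbrev Tens (K : Type) [Field K] (d n : ℕ) : Type := ⨂[K] (_ : Fin d), (Fin n → K)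

/-- The map `φ^{⊗d}` induced on `d`-way tensors by a linear map `φ`. -/
noncomputable def tmap (K : Type) [Field K] (d : ℕ) {m n : ℕ}
    (φ : (Fin m → K) →ₗ[K] (Fin n → K)) : Tens K d m →ₗ[K] Tens K d n :=
  PiTensorProduct.map (fun _ => φ)

/-- `Restricts K d S T` means `T` is a restriction of `S`, i.e. `S ⪰ T`. -/
def Restricts (K : Type) [Field K] (d : ℕ) {m n : ℕ}
    (S : Tens K d m) (T : Tens K d n) : Prop :=
  ∃ φ : (Fin m → K) →ₗ[K] (Fin n → K), tmap K d φ S = T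

/-- A restriction-closed property of `d`-way tensors. -/
def RClosed (K : Type) [Field K] (d : ℕ) (X : ∀ n : ℕ, Set (Tens K d n)) : Prop :=
  ∀ (m n : ℕ) (φ : (Fin m → K) →ₗ[K] (Fin n → K)), ∀ S ∈ X m, tmap K d φ S ∈ X n

lemma restricts_trans {K : Type} [Field K] {d a b c : ℕ}
    {S : Tens K d a} {T : Tens K d b} {R : Tens K d c}
    (h1 : Restricts K d S T) (h2 : Restricts K d T R) : Restricts K d S R := by
  obtain ⟨φ, hφ⟩ := h1
  obtain ⟨ψ, hψ⟩ := h2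
  refine ⟨ψ ∘ₗ φ, ?_⟩
  have hc : tmap K d (ψ ∘ₗ φ) = (tmap K d ψ).comp (tmap K d φ) := by
    simp [tmap, ← PiTensorProduct.map_comp]
  rw [hc]
  simp [hφ, hψ]

lemma restricts_refl {K : Type} [Field K] {d a : ℕ} (S : Tens K d a) :
    Restricts K d S S :=
  ⟨LinearMap.id, by simp [tmap]⟩

/-- If over the finite field `K` there are only finitely many `d`-way tensors on each space
up to restriction-equivalence, and every restriction-closed property `X` admits a single test
space `U` (membership in `X` can be tested by applying all linear maps into `U`), then the
tensor restriction theorem holds: in any sequence of tensors there are `i < j` with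
`T_j ⪰ T_i`. -/
theorem stmt2 (K : Type) [Field K] [Fintype K] (d : ℕ) (hd : 1 ≤ d)
    (h1 : ∀ u : ℕ, ∃ F : Set (Tens K d u), F.Finite ∧
      ∀ T : Tens K d u, ∃ S ∈ F, Restricts K d S T ∧ Restricts K d T S)
    (h3 : ∀ X : ∀ n : ℕ, Set (Tens K d n), RClosed K d X →
      ∃ u : ℕ, ∀ (n : ℕ) (T : Tens K d n),
        T ∈ X n ↔ ∀ φ : (Fin n → K) →ₗ[K] (Fin u → K), tmap K d φ T ∈ X u) :
    ∀ (dims : ℕ → ℕ) (T : ∀ i : ℕ, Tens K d (dims i)),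
      ∃ i j : ℕ, i < j ∧ Restricts K d (T j) (T i) := by
  intro dims T
  by_contra hcon
  push_neg at hcon
  set X : ∀ n : ℕ, Set (Tens K d n) :=
    fun n => {S | ∀ i, ¬ Restricts K d S (T i)} with hX
  have hXcl : RClosed K d X := by
    intro m n φ S hS i hi
    exact hS i (restricts_trans ⟨φ, rfl⟩ hi)
  obtain ⟨u, hu⟩ := h3 X hXcl
  obtain ⟨F, hFfin, hF⟩ := h1 u
  have key : ∀ j, ∃ (φ : (Fin (dims j) → K) →ₗ[K] (Fin u → K)) (i : ℕ),
      Restricts K d (tmap K d φ (T j)) (T i) := by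
    intro j
    have hTX : T j ∉ X (dims j) := fun hj => hj j (restricts_refl _)
    rw [hu] at hTX
    push_neg at hTX
    obtain ⟨φ, hφ⟩ := hTX
    simp only [hX, Set.mem_setOf_eq, not_forall, not_not] at hφ
    obtain ⟨i, hi⟩ := hφ
    exact ⟨φ, i, hi⟩
  choose φf idx hidx using key
  have hrep : ∀ j, ∃ S ∈ F, Restricts K d S (tmap K d (φf j) (T j)) ∧
      Restricts K d (tmap K d (φf j) (T j)) S := fun j => hF _
  choose rep hrepF hrep1 hrep2 using hrep
  haveI : Finite F := hFfin
  set g : ℕ → F := fun j => (⟨rep j, hrepF j⟩ : F) with hg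
  obtain ⟨y, hy⟩ := Finite.exists_infinite_fiber g
  have hyinf : {j : ℕ | rep j = y.1}.Infinite := by
    have h1 : (g ⁻¹' {y}).Infinite := Set.infinite_coe_iff.mp hy
    have h2 : {j : ℕ | rep j = y.1} = g ⁻¹' {y} := by
      ext j
      simp [hg, Subtype.ext_iff]
    rw [h2]
    exact h1
  obtain ⟨j, hjmem, -⟩ := hyinf.exists_gt 0
  obtain ⟨j', hj'mem, hj'⟩ := hyinf.exists_gt (max j (idx j))
  have hrr : rep j' = rep j := hj'mem.trans hjmem.symm
  have hchain : Restricts K d (T j') (T (idx j)) := by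
    refine restricts_trans ⟨φf j', rfl⟩ ?_
    refine restricts_trans (hrr ▸ hrep2 j') ?_
    exact restricts_trans (hrep1 j) (hidx j)
  exact hcon (idx j) j' (lt_of_le_of_lt (le_max_right _ _) hj') hchain
end

section
/- If f is a restriction-monotone real-valued function on d-way tensors over a finite field K (i.e., S ⪰ T implies f(S) ≥ f(T)), and restriction-closed properties satisfy the descending chain condition, then the set of values of f in ℝ is well-ordered (contains no infinite strictly decreasing sequence). -/
open scoped TensorProduct

/-- If `f` is a restriction-monotone real-valued function on `d`-way tensors over the finite
field `K` and restriction-closed properties satisfy the descending chain condition, then the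
set of values of `f` is well-ordered: it contains no infinite strictly decreasing sequence. -/
theorem stmt5 (K : Type) [Field K] [Fintype K] (d : ℕ) (hd : 1 ≤ d)
    (f : ∀ n : ℕ, Tens K d n → ℝ)
    (hmono : ∀ (m n : ℕ) (S : Tens K d m) (T : Tens K d n),
      Restricts K d S T → f n T ≤ f m S)
    (hdcc : ∀ X : ℕ → ∀ n : ℕ, Set (Tens K d n),
      (∀ i, RClosed K d (X i)) →
      (∀ i n, X (i + 1) n ⊆ X i n) →
      ∃ N : ℕ, ∀ i, N ≤ i → ∀ n, X i n = X N n) :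
    ¬ ∃ g : ℕ → ℝ, StrictAnti g ∧ ∀ i : ℕ, ∃ (n : ℕ) (T : Tens K d n), f n T = g i := by
  rintro ⟨g, hg, hval⟩
  set X : ℕ → ∀ n : ℕ, Set (Tens K d n) := fun i n => {T | f n T ≤ g i} with hX
  obtain ⟨N, hN⟩ := hdcc X
    (fun i m n φ S hS => le_trans (hmono m n S _ ⟨φ, rfl⟩) hS)
    (fun i n T hT => le_trans hT (hg (Nat.lt_succ_self i)).le)
  obtain ⟨n, T, hT⟩ := hval N
  have h1 : T ∈ X N n := le_of_eq hT
  have h2 : T ∈ X (N + 1) n := (hN (N + 1) (Nat.le_succ N) n).symm ▸ h1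
  exact absurd (hT ▸ h2) (not_le.mpr (hg (Nat.lt_succ_self N)))
end

section
/- The analytic rank of tensors over a finite field is restriction-monotone. Precisely: let K be a finite field, χ: (K,+) → (ℂ^×, ·) a non-trivial additive character, V₁,...,V_d finite-dimensional K-vector spaces, T: V₁^* × ... × V_d^* → K a multilinear form, and φ: V_d → W a linear map with induced T' (restriction of T along φ in the last factor). Then the analytic rank −log_{|K|} 𝔼[χ(T(x₁,...,x_d))] of T is at least that of T', where the expectation is over uniformly random (x₁,...,x_d). -/
open Finset

lemma charsum_aux {K : Type} [Field K] [Fintype K] {χ : AddChar K ℂ} (hχ : χ ≠ 1)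
    {M : Type} [AddCommGroup M] [Module K M] [Fintype M] (L : M →ₗ[K] K) [Decidable (L = 0)] :
    ∑ x : M, χ (L x) = if L = 0 then ((Fintype.card M : ℕ) : ℂ) else 0 := by
  split_ifs with h
  · subst h; simp [Finset.card_univ]
  · have hne : χ.compAddMonoidHom L.toAddMonoidHom ≠ 0 := by
      obtain ⟨a, ha⟩ := AddChar.ne_one_iff.1 hχ
      obtain ⟨b, hb⟩ : ∃ b, L b ≠ 0 := by
        by_contra hc; push_neg at hc
        exact h (LinearMap.ext fun x => by simp [hc])
      refine AddChar.ne_zero_iff.2 ⟨(a * (L b)⁻¹) • b, ?_⟩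
      have : L ((a * (L b)⁻¹) • b) = a := by
        rw [map_smul, smul_eq_mul, mul_assoc, inv_mul_cancel₀ hb, mul_one]
      simpa [this] using ha
    simpa using AddChar.sum_eq_zero_iff_ne_zero.2 hne

/-- Analytic rank is restriction-monotone. -/
theorem stmt6 (K : Type) [Field K] [Fintype K] (χ : AddChar K ℂ) (hχ : χ ≠ 1) (d : ℕ)
    (A : Fin (d + 1) → Type) [∀ i, AddCommGroup (A i)] [∀ i, Module K (A i)]
    [∀ i, Fintype (A i)] [∀ i, DecidableEq (A i)]
    (B : Type) [AddCommGroup B] [Module K B] [Fintype B]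
    (T : MultilinearMap K A K) (ψ : B →ₗ[K] A (Fin.last d)) :
    -Real.logb (Fintype.card K)
        ((∑ y : (∀ i : Fin d, A i.castSucc) × B, χ (T (Fin.snoc y.1 (ψ y.2)))).re
          / Fintype.card ((∀ i : Fin d, A i.castSucc) × B)) ≤
    -Real.logb (Fintype.card K)
        ((∑ x : ∀ i, A i, χ (T x)).re / Fintype.card (∀ i, A i)) := by
  classical
  set P := ∀ i : Fin d, A i.castSucc with hP
  let L : P → (A (Fin.last d) →ₗ[K] K) := fun y => T.toLinearMap (Fin.snoc y 0) (Fin.last d)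
  have hL : ∀ (y : P) (x : A (Fin.last d)), L y x = T (Fin.snoc y x) := by
    intro y x
    simp only [L, MultilinearMap.toLinearMap_apply, Fin.update_snoc_last]
  set NA := (univ.filter fun y : P => L y = 0).card with hNA
  set NB := (univ.filter fun y : P => (L y).comp ψ = 0).card with hNB
  -- sum over the full space
  have hsumA : ∑ x : ∀ i, A i, χ (T x) = ((NA * Fintype.card (A (Fin.last d)) : ℕ) : ℂ) := by
    rw [← (Fin.snocEquiv A).sum_comp (fun x => χ (T x)), Fintype.sum_prod_type_right]
    have h1 : ∀ y : P, ∑ x : A (Fin.last d), χ (T (Fin.snocEquiv A (x, y)))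
        = if L y = 0 then ((Fintype.card (A (Fin.last d)) : ℕ) : ℂ) else 0 := by
      intro y
      rw [← charsum_aux hχ (L y)]
      exact Finset.sum_congr rfl fun x _ => by rw [hL]; rfl
    rw [Finset.sum_congr rfl fun y _ => h1 y, ← Finset.sum_filter, Finset.sum_const,
      nsmul_eq_mul]
    push_cast [hNA]
    ring
  -- sum over the restricted space
  have hsumB : ∑ y : P × B, χ (T (Fin.snoc y.1 (ψ y.2)))
      = ((NB * Fintype.card B : ℕ) : ℂ) := by
    rw [Fintype.sum_prod_type]
    have h1 : ∀ y : P, ∑ b : B, χ (T (Fin.snoc y (ψ b)))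
        = if (L y).comp ψ = 0 then ((Fintype.card B : ℕ) : ℂ) else 0 := by
      intro y
      rw [← charsum_aux hχ ((L y).comp ψ)]
      exact Finset.sum_congr rfl fun b _ => by rw [LinearMap.comp_apply, hL]
    rw [Finset.sum_congr rfl fun y _ => h1 y, ← Finset.sum_filter, Finset.sum_const,
      nsmul_eq_mul]
    push_cast [hNB]
    ring
  have hcardA : (Fintype.card (∀ i, A i) : ℝ)
      = Fintype.card (A (Fin.last d)) * Fintype.card P := by
    rw [Fintype.card_congr (Fin.snocEquiv A).symm, Fintype.card_prod]; push_cast; ring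
  have hcPpos : (0 : ℝ) < Fintype.card P := by positivity
  have hcApos : (0 : ℝ) < Fintype.card (A (Fin.last d)) := by positivity
  have hcBpos : (0 : ℝ) < Fintype.card B := by positivity
  have heA : ((∑ x : ∀ i, A i, χ (T x)).re / Fintype.card (∀ i, A i))
      = (NA : ℝ) / Fintype.card P := by
    rw [hsumA, Complex.natCast_re, hcardA]
    push_cast
    rw [mul_comm (NA : ℝ)]
    rw [mul_div_mul_left _ _ (ne_of_gt hcApos)]
  have heB : ((∑ y : P × B, χ (T (Fin.snoc y.1 (ψ y.2)))).re / Fintype.card (P × B))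
      = (NB : ℝ) / Fintype.card P := by
    rw [hsumB, Complex.natCast_re, Fintype.card_prod]
    push_cast
    rw [mul_div_mul_right _ _ (ne_of_gt hcBpos)]
  rw [heA, heB]
  -- counting inequalities
  have hAB : NA ≤ NB := by
    apply Finset.card_le_card
    intro y hy
    simp only [Finset.mem_filter, Finset.mem_univ, true_and] at hy ⊢
    rw [hy, LinearMap.zero_comp]
  have hBP : NB ≤ Fintype.card P := (Finset.card_filter_le _ _).trans_eq (by simp)
  have hq : (1 : ℝ) < Fintype.card K := by
    exact_mod_cast Fintype.one_lt_card
  by_cases hd : 0 < d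
  · -- NA ≥ 1 : the zero tuple works
    have hNA1 : 1 ≤ NA := by
      rw [hNA]
      refine Finset.card_pos.2 ⟨0, ?_⟩
      simp only [Finset.mem_filter, Finset.mem_univ, true_and]
      apply LinearMap.ext
      intro x
      rw [hL]
      simp only [LinearMap.zero_apply]
      exact T.map_coord_zero (Fin.castSucc ⟨0, hd⟩) (by rw [Fin.snoc_castSucc]; rfl)
    have h0A : (0:ℝ) < NA := by exact_mod_cast hNA1
    have h0B : (0:ℝ) < NB := lt_of_lt_of_le h0A (by exact_mod_cast hAB)
    apply neg_le_neg
    apply (Real.logb_le_logb hq (div_pos h0A hcPpos) (div_pos h0B hcPpos)).2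
    gcongr
  · -- d = 0 : card P = 1, both sides vanish
    have hd0 : d = 0 := by omega
    subst hd0
    have hcP : Fintype.card P = 1 :=
      Fintype.card_eq_one_iff.2 ⟨fun i => i.elim0, fun y => funext fun i => i.elim0⟩
    rw [hcP, Nat.cast_one]
    have hlog : ∀ n : ℕ, n ≤ 1 → Real.logb (Fintype.card K) ((n : ℝ) / 1) = 0 := by
      intro n hn
      interval_cases n <;> simp
    rw [hlog NA (hAB.trans (hBP.trans_eq hcP)), hlog NB (hBP.trans_eq hcP)]
end

section
/- Let P be a polynomial generic representation over a finite field, e ≥ −1, and R a subrepresentation of P_{>e}. Then (P/R)_{>e} ≅ P_{>e}/R, where for a polynomial representation Q, Q_{>e} denotes the unique minimal subrepresentation with deg(Q/Q_{>e}) ≤ e. -/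
/-- A generic representation over `K`, presented on the skeleton `n ↦ K^n` of the category
of finite-dimensional `K`-vector spaces: a functor `Vec → Vec`. -/
structure GenRep (K : Type) [Field K] where
  obj : ℕ → Type
  [addcg : ∀ n, AddCommGroup (obj n)]
  [mod : ∀ n, Module K (obj n)]
  map : ∀ {m n : ℕ}, ((Fin m → K) →ₗ[K] (Fin n → K)) → (obj m →ₗ[K] obj n)
  map_id : ∀ n : ℕ, map (LinearMap.id : (Fin n → K) →ₗ[K] (Fin n → K)) = LinearMap.id
  map_comp : ∀ {m n p : ℕ} (φ : (Fin m → K) →ₗ[K] (Fin n → K))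
    (ψ : (Fin n → K) →ₗ[K] (Fin p → K)), map (ψ ∘ₗ φ) = map ψ ∘ₗ map φ

attribute [instance] GenRep.addcg GenRep.mod

variable {K : Type} [Field K]

/-- `f : (α → K) → W` is (given by) a polynomial of (total) degree at most `e` in the
coordinates, with coefficients in the `K`-module `W`.  For `e = -1` this forces `f = 0`. -/
def PolyDeg (K : Type) [Field K] {α : Type} [Fintype α] {W : Type} [AddCommGroup W]
    [Module K W] (e : ℤ) (f : (α → K) → W) : Prop :=
  ∃ (s : Finset (α →₀ ℕ)) (c : (α →₀ ℕ) → W),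
    (∀ m ∈ s, ((m.sum fun _ k => k : ℕ) : ℤ) ≤ e) ∧
    ∀ x : α → K, f x = ∑ m ∈ s, (∏ a ∈ m.support, x a ^ m a) • c m

/-- A generic representation has degree at most `e` if all its maps
`Hom(K^m, K^n) → Hom(P(K^m), P(K^n))` are polynomial of degree `≤ e` in the matrix entries. -/
def GenRep.HasDegLE (P : GenRep K) (e : ℤ) : Prop :=
  ∀ m n : ℕ, PolyDeg K e (fun x : Fin n × Fin m → K =>
    P.map ((Matrix.of fun i j => x (i, j)).mulVecLin))

/-- A generic representation is polynomial if it has some finite degree. -/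
def GenRep.IsPoly (P : GenRep K) : Prop := ∃ e : ℤ, P.HasDegLE e

/-- `P` has degree exactly `d`. -/
def GenRep.IsDegree (P : GenRep K) (d : ℤ) : Prop :=
  P.HasDegLE d ∧ ∀ e : ℤ, P.HasDegLE e → d ≤ e

/-- A subrepresentation of a generic representation. -/
structure SubRep (P : GenRep K) where
  carrier : ∀ n : ℕ, Submodule K (P.obj n)
  stable : ∀ {m n : ℕ} (φ : (Fin m → K) →ₗ[K] (Fin n → K)),
    ∀ x ∈ carrier m, P.map φ x ∈ carrier n

/-- The quotient representation `P/N` has degree at most `e`; expressed via the composites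
`mkQ ∘ P(φ)`, which present the maps of `P/N`. -/
def QuotDegLE (P : GenRep K) (N : SubRep P) (e : ℤ) : Prop :=
  ∀ m n : ℕ, PolyDeg K e (fun x : Fin n × Fin m → K =>
    (N.carrier n).mkQ ∘ₗ P.map ((Matrix.of fun i j => x (i, j)).mulVecLin))

/-- `N` is the top part `P_{>e}`: the inclusion-wise minimal subrepresentation of `P` whose
quotient has degree at most `e`. -/
def IsTopPart (P : GenRep K) (e : ℤ) (N : SubRep P) : Prop :=
  QuotDegLE P N e ∧ ∀ N' : SubRep P, QuotDegLE P N' e → ∀ n, N.carrier n ≤ N'.carrier n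

/-- A morphism (natural transformation) of generic representations. -/
structure RepHom (P Q : GenRep K) where
  app : ∀ n : ℕ, P.obj n →ₗ[K] Q.obj n
  natural : ∀ {m n : ℕ} (φ : (Fin m → K) →ₗ[K] (Fin n → K)),
    app n ∘ₗ P.map φ = Q.map φ ∘ₗ app m

/-- The quotient generic representation `P/R`. -/
def GenRep.quot (P : GenRep K) (R : SubRep P) : GenRep K where
  obj n := P.obj n ⧸ R.carrier n
  map φ := Submodule.mapQ _ _ (P.map φ) (fun x hx => R.stable φ x hx)
  map_id n := by
    apply Submodule.linearMap_qext
    ext x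
    simp [Submodule.mapQ_apply, P.map_id]
  map_comp φ ψ := by
    apply Submodule.linearMap_qext
    ext x
    simp [Submodule.mapQ_apply, P.map_comp]

/-!
`(P/R)_{>e}` is the image of `P_{>e}` in `P/R`. Composing with quotient maps and their
one-sided inverses preserves polynomiality of degree `≤ e`, so this image has a quotient of
degree `≤ e`, and so does the preimage in `P` of any subrepresentation of `P/R` whose quotient
has degree `≤ e`; minimality of `P_{>e}` places the image below every such subrepresentation.
-/

namespace PolyDeg

variable {α : Type} [Fintype α] {e : ℤ}

lemma linearMap_comp {W W' : Type} [AddCommGroup W] [Module K W] [AddCommGroup W']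
    [Module K W'] (L : W →ₗ[K] W') {f : (α → K) → W} (hf : PolyDeg K e f) :
    PolyDeg K e (fun x => L (f x)) := by
  obtain ⟨s, c, hs, hf⟩ := hf
  exact ⟨s, fun m => L (c m), hs, fun x => by simp [hf x, map_sum, map_smul]⟩

variable {V V' W W' : Type} [AddCommGroup V] [Module K V] [AddCommGroup V'] [Module K V']
  [AddCommGroup W] [Module K W] [AddCommGroup W'] [Module K W']

lemma comp_comp (A : W →ₗ[K] W') (B : V' →ₗ[K] V) {f : (α → K) → V →ₗ[K] W}
    (hf : PolyDeg K e f) : PolyDeg K e (fun x => A ∘ₗ f x ∘ₗ B) :=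
  hf.linearMap_comp (LinearMap.lcomp K W' B ∘ₗ LinearMap.llcomp K V W W' A)

lemma of_comp_surjective {f : (α → K) → V →ₗ[K] W} {g : (α → K) → V' →ₗ[K] W'}
    (p : V →ₗ[K] V') (q : W →ₗ[K] W') (hp : Function.Surjective p)
    (hfg : ∀ x, g x ∘ₗ p = q ∘ₗ f x) (hf : PolyDeg K e f) : PolyDeg K e g := by
  obtain ⟨s, hs⟩ := p.exists_rightInverse_of_surjective (LinearMap.range_eq_top.2 hp)
  have hg : ∀ x, g x = q ∘ₗ f x ∘ₗ s := fun x => by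
    rw [← LinearMap.comp_assoc, ← hfg, LinearMap.comp_assoc, hs, LinearMap.comp_id]
  obtain ⟨t, c, hdeg, hf⟩ := hf.comp_comp q s
  exact ⟨t, c, hdeg, fun x => (hg x).trans (hf x)⟩

lemma of_injective_comp {f : (α → K) → V →ₗ[K] W} {g : (α → K) → V' →ₗ[K] W'}
    (p : V' →ₗ[K] V) (q : W' →ₗ[K] W) (hq : Function.Injective q)
    (hfg : ∀ x, q ∘ₗ g x = f x ∘ₗ p) (hf : PolyDeg K e f) : PolyDeg K e g := by
  obtain ⟨r, hr⟩ := q.exists_leftInverse_of_injective (LinearMap.ker_eq_bot.2 hq)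
  have hg : ∀ x, g x = r ∘ₗ f x ∘ₗ p := fun x => by
    rw [← hfg, ← LinearMap.comp_assoc, hr, LinearMap.id_comp]
  obtain ⟨t, c, hdeg, hf⟩ := hf.comp_comp r p
  exact ⟨t, c, hdeg, fun x => (hg x).trans (hf x)⟩

end PolyDeg

namespace SubRep

variable {P : GenRep K}

def mapQuot (N R : SubRep P) : SubRep (P.quot R) where
  carrier n := (N.carrier n).map (R.carrier n).mkQ
  stable φ := by
    rintro _ ⟨y, hy, rfl⟩
    exact ⟨P.map φ y, N.stable φ y hy, rfl⟩

def comapQuot (R : SubRep P) (N : SubRep (P.quot R)) : SubRep P where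
  carrier n := (N.carrier n).comap (R.carrier n).mkQ
  stable φ _ hx := N.stable φ _ hx

end SubRep

section QuotDegLE

variable {P : GenRep K} {R : SubRep P} {e : ℤ}

lemma QuotDegLE.mapQuot {N : SubRep P} (hN : QuotDegLE P N e) :
    QuotDegLE (P.quot R) (N.mapQuot R) e := fun m n =>
  (hN m n).of_comp_surjective (R.carrier m).mkQ
    ((N.carrier n).mapQ ((N.mapQuot R).carrier n) (R.carrier n).mkQ
      (Submodule.le_comap_map _ _))
    (Submodule.mkQ_surjective _)
    (fun _ => LinearMap.ext fun _ => rfl)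

lemma QuotDegLE.comapQuot {N : SubRep (P.quot R)} (hN : QuotDegLE (P.quot R) N e) :
    QuotDegLE P (R.comapQuot N) e := fun m n =>
  (hN m n).of_injective_comp (R.carrier m).mkQ
    (((R.comapQuot N).carrier n).mapQ (N.carrier n) (R.carrier n).mkQ le_rfl)
    (by
      rw [injective_iff_map_eq_zero]
      rintro ⟨w⟩ hw
      exact (Submodule.Quotient.mk_eq_zero _).2
        ((Submodule.Quotient.mk_eq_zero (N.carrier n)).1 hw))
    (fun _ => LinearMap.ext fun _ => rfl)

end QuotDegLE

namespace IsTopPart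

variable {P : GenRep K} {e : ℤ}

lemma mapQuot {N : SubRep P} (hN : IsTopPart P e N) (R : SubRep P) :
    IsTopPart (P.quot R) e (N.mapQuot R) := by
  refine ⟨hN.1.mapQuot, fun N' hN' n => ?_⟩
  rintro _ ⟨y, hy, rfl⟩
  exact hN.2 (R.comapQuot N') hN'.comapQuot n hy

lemma carrier_eq {N N' : SubRep P} (hN : IsTopPart P e N) (hN' : IsTopPart P e N') (n : ℕ) :
    N.carrier n = N'.carrier n :=
  le_antisymm (hN.2 N' hN'.1 n) (hN'.2 N hN.1 n)

end IsTopPart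

theorem stmt12_general (K : Type) [Field K] (P : GenRep K)
    (e : ℤ) (N : SubRep P) (hN : IsTopPart P e N)
    (R : SubRep P) :
    (∃ N' : SubRep (P.quot R), IsTopPart (P.quot R) e N' ∧
      ∀ n, N'.carrier n = (N.carrier n).map (R.carrier n).mkQ) ∧
    (∀ N' : SubRep (P.quot R), IsTopPart (P.quot R) e N' →
      ∀ n, N'.carrier n = (N.carrier n).map (R.carrier n).mkQ) :=
  ⟨⟨N.mapQuot R, hN.mapQuot R, fun _ => rfl⟩,
    fun _ hN' n => hN'.carrier_eq (hN.mapQuot R) n⟩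

/-- For a polynomial generic representation `P`, `e ≥ -1`, and a subrepresentation
`R ⊆ P_{>e}`, one has `(P/R)_{>e} ≅ P_{>e}/R`: the image of `P_{>e}` under the quotient
maps is a top part of `P/R`, and any top part of `P/R` equals this image. -/
theorem stmt12 (K : Type) [Field K] [Fintype K] (P : GenRep K) (hP : P.IsPoly)
    (e : ℤ) (he : -1 ≤ e) (N : SubRep P) (hN : IsTopPart P e N)
    (R : SubRep P) (hRN : ∀ n, R.carrier n ≤ N.carrier n) :
    (∃ N' : SubRep (P.quot R), IsTopPart (P.quot R) e N' ∧
      ∀ n, N'.carrier n = (N.carrier n).map (R.carrier n).mkQ) ∧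
    (∀ N' : SubRep (P.quot R), IsTopPart (P.quot R) e N' →
      ∀ n, N'.carrier n = (N.carrier n).map (R.carrier n).mkQ) :=
  stmt12_general K P e N hN R
end

section
/- Let K be a prime field with q elements, P a polynomial generic representation over K, and F_{n+1,j}: P(K^n) → P(K^{n+1}) the operator sending p to the coefficient of s¹ in P(g_{n+1,j}(s) ∘ ι)p, where ι: K^n → K^{n+1} is the standard inclusion and g_{n+1,j}(s) = I + sE_{n+1,j}. Then F_{n+1,j} is injective on the direct sum of the weight spaces P(K^n)_χ with χ = (a₁,...,a_n) satisfying a_j > 0, and is zero on the weight spaces with a_j = 0. -/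
variable {K : Type} [Field K]

/-- The standard inclusion `K^n → K^{n+1}` (appending a zero coordinate). -/
def stdIncl (K : Type) [Field K] (n : ℕ) : (Fin n → K) →ₗ[K] (Fin (n + 1) → K) where
  toFun x := Fin.snoc x 0
  map_add' a b := by
    funext i
    cases i using Fin.lastCases <;> simp
  map_smul' c a := by
    funext i
    cases i using Fin.lastCases <;> simp

/-- The weight space for the weight given by an exponent tuple `a`, i.e. for the character
`diag(t) ↦ ∏ tᵢ^{aᵢ}`. -/
def wtSpE (P : GenRep K) (n : ℕ) (a : Fin n → ℕ) : Submodule K (P.obj n) where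
  carrier := {p | ∀ t : Fin n → K,
    P.map (Matrix.diagonal t).mulVecLin p = (∏ i, t i ^ a i) • p}
  add_mem' := by
    intro x y hx hy t
    simp [map_add, hx t, hy t, smul_add]
  zero_mem' := by
    intro t
    simp
  smul_mem' := by
    intro c x hx t
    rw [map_smul, hx t, smul_comm]

/-! Evaluating `s ↦ P(g_{n+1,j}(s) ∘ ι) p` at all `q` points of `K` and inverting the Vandermonde
matrix expresses `F_{n+1,j}` as a weighted sum `∑ₛ w(s) • P(g_{n+1,j}(s) ∘ ι)`.

If `a_j = 0`, then `p` is fixed by the diagonal matrix killing the `j`-th coordinate, and this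
matrix absorbs the transvection; so `s ↦ P(g_{n+1,j}(s) ∘ ι) p` is constant and its
`s¹`-coefficient vanishes.

If `φ : K^{n+1} → K^n` adds the last coordinate to the `j`-th one, then
`φ ∘ g_{n+1,j}(s) ∘ ι = diag(1, …, 1 + s, …, 1)`, so `P(φ) ∘ F_{n+1,j}` acts on the weight space
of `a` by the `s¹`-coefficient of `(1 + s)^{a_j}`, namely `a_j`, which is a unit of `K` when
`0 < a_j < q`. Eigenspaces of distinct eigenvalues being independent, `P(φ) ∘ F_{n+1,j}` is then
injective on the sum of these weight spaces.
-/

namespace FiniteField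

variable [Fintype K]

def ExtractsCoeff (w : K → K) (b : Fin (Fintype.card K)) : Prop :=
  ∀ k : Fin (Fintype.card K), ∑ s, w s * s ^ (k : ℕ) = if k = b then 1 else 0

theorem exists_extractsCoeff (b : Fin (Fintype.card K)) : ∃ w : K → K, ExtractsCoeff w b := by
  let e := (Fintype.equivFin K).symm
  let M := Matrix.vandermonde fun i => e i
  have hM : IsUnit M.det := (Matrix.det_vandermonde_ne_zero_iff.mpr e.injective).isUnit
  refine ⟨fun s => M⁻¹ b (e.symm s), fun k => ?_⟩
  rw [← e.sum_comp]
  have := congrFun (congrFun (Matrix.nonsing_inv_mul M hM) b) k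
  simpa [M, Matrix.mul_apply, Matrix.one_apply, eq_comm] using this

variable {b : Fin (Fintype.card K)} {w : K → K}

theorem ExtractsCoeff.sum_smul_eq (hw : ExtractsCoeff w b)
    {W : Type} [AddCommGroup W] [Module K W] {f : K → W} {c : Fin (Fintype.card K) → W}
    (hf : ∀ s, f s = ∑ k : Fin (Fintype.card K), s ^ (k : ℕ) • c k) :
    ∑ s, w s • f s = c b := by
  unfold ExtractsCoeff at hw
  simp_rw [hf, Finset.smul_sum, smul_smul]
  rw [Finset.sum_comm]
  simp_rw [← Finset.sum_smul, hw, ite_smul, one_smul, zero_smul]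
  simp

theorem ExtractsCoeff.sum_eq_zero (hw : ExtractsCoeff w b) (hb : (b : ℕ) ≠ 0) :
    ∑ s, w s = 0 := by
  simpa [Fin.ext_iff, eq_comm, hb] using hw ⟨0, Fintype.card_pos⟩

theorem ExtractsCoeff.sum_mul_one_add_pow_eq (hw : ExtractsCoeff w b) (hb : (b : ℕ) = 1)
    {d : ℕ} (hd : d < Fintype.card K) : ∑ s, w s * (1 + s) ^ d = d := by
  have hexp (s : K) :
      (1 + s) ^ d = ∑ k : Fin (Fintype.card K), s ^ (k : ℕ) • (d.choose k : K) := by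
    rw [add_comm, add_pow, Fin.sum_univ_eq_sum_range (fun k => s ^ k • (d.choose k : K))]
    simp only [one_pow, mul_one, smul_eq_mul]
    refine Finset.sum_subset (Finset.range_subset_range.mpr hd) fun k _ hk => ?_
    simp [Nat.choose_eq_zero_of_lt (by simpa using hk : d < k)]
  simpa [hb] using hw.sum_smul_eq hexp

theorem natCast_ne_zero_of_lt_card (hq : (Fintype.card K).Prime) {d : ℕ} (hd0 : d ≠ 0)
    (hd : d < Fintype.card K) : (d : K) ≠ 0 := by
  have := Fact.mk hq
  have := charP_of_card_eq_prime (R := K) rfl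
  rw [Ne, CharP.cast_eq_zero_iff K (Fintype.card K)]
  exact fun h => hd0 (Nat.eq_zero_of_dvd_of_lt h hd)

end FiniteField

theorem Module.End.disjoint_ker_biSup_of_le_eigenspace {R M ι : Type*} [Field R]
    [AddCommGroup M] [Module R M] (f : Module.End R M) {s : Set ι} {N : ι → Submodule R M}
    {μ : ι → R} (hμ : ∀ i ∈ s, μ i ≠ 0) (hN : ∀ i ∈ s, N i ≤ f.eigenspace (μ i)) :
    Disjoint (LinearMap.ker f) (⨆ i ∈ s, N i) := by
  have hsup : ⨆ i ∈ s, N i ≤ ⨆ ν ≠ (0 : R), f.eigenspace ν :=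
    iSup₂_le fun i hi => (hN i hi).trans
      (le_iSup₂ (f := fun ν (_ : ν ≠ 0) => f.eigenspace ν) (μ i) (hμ i hi))
  rw [← Module.End.eigenspace_zero]
  exact (f.eigenspaces_iSupIndep 0).mono_right hsup

section Transvection

variable {n : ℕ} (j : Fin n)

variable (K) in
def transvectionIncl (s : K) : (Fin n → K) →ₗ[K] (Fin (n + 1) → K) :=
  (1 + s • Matrix.single (Fin.last n) j.castSucc (1 : K)).mulVecLin ∘ₗ stdIncl K n

theorem transvectionIncl_apply (s : K) (x : Fin n → K) :
    transvectionIncl K j s x = Fin.snoc x (s * x j) := by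
  ext k
  cases k using Fin.lastCases with
  | last => simp [transvectionIncl, stdIncl, Matrix.single_mulVec]
  | cast i =>
    simp [transvectionIncl, stdIncl, Matrix.single_mulVec, (Fin.castSucc_lt_last i).ne]

theorem transvectionIncl_comp_diagonal_update_zero (s : K) :
    transvectionIncl K j s ∘ₗ (Matrix.diagonal (Function.update 1 j 0)).mulVecLin =
      stdIncl K n ∘ₗ (Matrix.diagonal (Function.update 1 j 0)).mulVecLin := by
  refine LinearMap.ext fun x => ?_
  simp only [LinearMap.comp_apply, transvectionIncl_apply]
  simp [stdIncl, Matrix.mulVec_diagonal]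

variable (K) in
def addLastTo : (Fin (n + 1) → K) →ₗ[K] (Fin n → K) :=
  LinearMap.funLeft K K Fin.castSucc +
    LinearMap.single K (fun _ => K) j ∘ₗ LinearMap.proj (Fin.last n)

theorem addLastTo_comp_transvectionIncl (s : K) :
    addLastTo K j ∘ₗ transvectionIncl K j s =
      (Matrix.diagonal (Function.update 1 j (1 + s))).mulVecLin := by
  refine LinearMap.ext fun x => funext fun i => ?_
  simp only [LinearMap.comp_apply, transvectionIncl_apply]
  by_cases h : i = j
  · subst h
    simp [addLastTo, LinearMap.funLeft, Matrix.mulVec_diagonal]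
    ring
  · simp [addLastTo, LinearMap.funLeft, Matrix.mulVec_diagonal, h]

theorem prod_update_one_pow (a : Fin n → ℕ) (x : K) :
    ∏ i, Function.update (1 : Fin n → K) j x i ^ a i = x ^ a j := by
  rw [Finset.prod_eq_single j (fun i _ hi => by simp [hi]) (by simp)]
  simp

end Transvection

namespace GenRep

variable (P : GenRep K) {n : ℕ}

theorem map_comp_diagonal_apply_of_mem_wtSpE {m : ℕ} {a : Fin n → ℕ} {p : P.obj n}
    (hp : p ∈ wtSpE P n a) (ψ : (Fin n → K) →ₗ[K] (Fin m → K)) (t : Fin n → K) :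
    P.map (ψ ∘ₗ (Matrix.diagonal t).mulVecLin) p = (∏ i, t i ^ a i) • P.map ψ p := by
  rw [P.map_comp, LinearMap.comp_apply, hp t, map_smul]

variable [Fintype K]

-- With weights `w` satisfying `FiniteField.ExtractsCoeff w 1` this is `F_{n+1,j}`.
def transvectionSum (j : Fin n) (w : K → K) : P.obj n →ₗ[K] P.obj (n + 1) :=
  ∑ s, w s • P.map (transvectionIncl K j s)

variable {j : Fin n} {b : Fin (Fintype.card K)} {w : K → K}

theorem transvectionSum_apply (p : P.obj n) :
    P.transvectionSum j w p = ∑ s, w s • P.map (transvectionIncl K j s) p := by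
  simp [transvectionSum]

theorem transvectionSum_apply_eq_coeff (hw : FiniteField.ExtractsCoeff w b) {p : P.obj n}
    {c : Fin (Fintype.card K) → P.obj (n + 1)}
    (hc : ∀ s, P.map (transvectionIncl K j s) p = ∑ k : Fin (Fintype.card K), s ^ (k : ℕ) • c k) :
    P.transvectionSum j w p = c b :=
  (P.transvectionSum_apply p).trans (hw.sum_smul_eq hc)

theorem transvectionSum_eq_zero_of_mem_wtSpE (hw : FiniteField.ExtractsCoeff w b)
    (hb : (b : ℕ) ≠ 0) {a : Fin n → ℕ} (haj : a j = 0) {p : P.obj n} (hp : p ∈ wtSpE P n a) :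
    P.transvectionSum j w p = 0 := by
  have hfix (ψ : (Fin n → K) →ₗ[K] (Fin (n + 1) → K)) :
      P.map (ψ ∘ₗ (Matrix.diagonal (Function.update 1 j 0)).mulVecLin) p = P.map ψ p := by
    rw [P.map_comp_diagonal_apply_of_mem_wtSpE hp, prod_update_one_pow, haj, pow_zero, one_smul]
  have hconst (s : K) : P.map (transvectionIncl K j s) p = P.map (stdIncl K n) p := by
    rw [← hfix, transvectionIncl_comp_diagonal_update_zero, hfix]
  simp_rw [transvectionSum_apply, hconst, ← Finset.sum_smul,
    hw.sum_eq_zero hb, zero_smul]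

theorem wtSpE_le_eigenspace_addLastTo_comp_transvectionSum (hw : FiniteField.ExtractsCoeff w b)
    (hb : (b : ℕ) = 1) {a : Fin n → ℕ} (haj : a j < Fintype.card K) :
    wtSpE P n a ≤
      Module.End.eigenspace (P.map (addLastTo K j) ∘ₗ P.transvectionSum j w) (a j : K) := by
  intro p hp
  have hdiag (s : K) :
      P.map (addLastTo K j) (P.map (transvectionIncl K j s) p) = (1 + s) ^ a j • p := by
    rw [← LinearMap.comp_apply, ← P.map_comp, addLastTo_comp_transvectionIncl, hp,
      prod_update_one_pow]
  rw [Module.End.mem_eigenspace_iff, LinearMap.comp_apply, transvectionSum_apply, map_sum]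
  simp_rw [map_smul, hdiag, smul_smul, ← Finset.sum_smul,
    hw.sum_mul_one_add_pow_eq hb haj]

end GenRep

theorem stmt18_general (K : Type) [Field K] [Fintype K] (hq : (Fintype.card K).Prime)
    (P : GenRep K) (n : ℕ) (j : Fin n) :
    (∀ a : Fin n → ℕ, (∀ i, a i ≤ Fintype.card K - 1) → a j = 0 →
      ∀ p ∈ wtSpE P n a, ∀ c : Fin (Fintype.card K) → P.obj (n + 1),
        (∀ s : K,
          P.map ((1 + s • Matrix.single (Fin.last n) j.castSucc (1 : K)).mulVecLin
              ∘ₗ stdIncl K n) p =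
            ∑ b : Fin (Fintype.card K), s ^ (b : ℕ) • c b) →
        c ⟨1, hq.one_lt⟩ = 0) ∧
    (∀ p ∈ ⨆ a ∈ {a : Fin n → ℕ | (∀ i, a i ≤ Fintype.card K - 1) ∧ 0 < a j},
        wtSpE P n a,
      ∀ c : Fin (Fintype.card K) → P.obj (n + 1),
        (∀ s : K,
          P.map ((1 + s • Matrix.single (Fin.last n) j.castSucc (1 : K)).mulVecLin
              ∘ₗ stdIncl K n) p =
            ∑ b : Fin (Fintype.card K), s ^ (b : ℕ) • c b) →
        c ⟨1, hq.one_lt⟩ = 0 → p = 0) := by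
  obtain ⟨w, hw⟩ := FiniteField.exists_extractsCoeff (K := K) ⟨1, hq.one_lt⟩
  have hlt {d : ℕ} (hd : d ≤ Fintype.card K - 1) : d < Fintype.card K := by
    have := hq.two_le
    omega
  refine ⟨fun a _ haj p hp c hc => ?_, fun p hp c hc hc1 => ?_⟩
  · rw [← P.transvectionSum_apply_eq_coeff hw hc]
    exact P.transvectionSum_eq_zero_of_mem_wtSpE hw one_ne_zero haj hp
  · let T : Module.End K (P.obj n) := P.map (addLastTo K j) ∘ₗ P.transvectionSum j w
    refine Submodule.disjoint_def.mp
      (T.disjoint_ker_biSup_of_le_eigenspace (μ := fun a => (a j : K)) ?_ ?_) p ?_ hp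
    · exact fun a ha => FiniteField.natCast_ne_zero_of_lt_card hq ha.2.ne' (hlt (ha.1 j))
    · exact fun a ha =>
        P.wtSpE_le_eigenspace_addLastTo_comp_transvectionSum hw rfl (hlt (ha.1 j))
    · rw [LinearMap.mem_ker, LinearMap.comp_apply, P.transvectionSum_apply_eq_coeff hw hc, hc1,
        map_zero]

/-- Over a prime field `K` with `q` elements, the operator `F_{n+1,j}` (the coefficient of
`s¹` in `P(g_{n+1,j}(s) ∘ ι) p`) vanishes on every weight space whose weight has `a_j = 0`,
and is injective on the direct sum of the weight spaces whose weights have `a_j > 0`. -/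
theorem stmt18 (K : Type) [Field K] [Fintype K] (hq : (Fintype.card K).Prime)
    (P : GenRep K) (hP : P.IsPoly) (n : ℕ) (j : Fin n) :
    (∀ a : Fin n → ℕ, (∀ i, a i ≤ Fintype.card K - 1) → a j = 0 →
      ∀ p ∈ wtSpE P n a, ∀ c : Fin (Fintype.card K) → P.obj (n + 1),
        (∀ s : K,
          P.map ((1 + s • Matrix.single (Fin.last n) j.castSucc (1 : K)).mulVecLin
              ∘ₗ stdIncl K n) p =
            ∑ b : Fin (Fintype.card K), s ^ (b : ℕ) • c b) →
        c ⟨1, hq.one_lt⟩ = 0) ∧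
    (∀ p ∈ ⨆ a ∈ {a : Fin n → ℕ | (∀ i, a i ≤ Fintype.card K - 1) ∧ 0 < a j},
        wtSpE P n a,
      ∀ c : Fin (Fintype.card K) → P.obj (n + 1),
        (∀ s : K,
          P.map ((1 + s • Matrix.single (Fin.last n) j.castSucc (1 : K)).mulVecLin
              ∘ₗ stdIncl K n) p =
            ∑ b : Fin (Fintype.card K), s ^ (b : ℕ) • c b) →
        c ⟨1, hq.one_lt⟩ = 0 → p = 0) :=
  stmt18_general K hq P n j
end

section
/- Let P be a polynomial generic representation over a finite field K with P(0) = 0. Then the full subset X := P is irreducible: whenever X = X₁ ∪ X₂ for restriction-closed subsets X₁, X₂ of P, we have X = X₁ or X = X₂. Specifically, if T₁ ∈ P(V₁) is forbidden for X₁ and T₂ ∈ P(V₂) is forbidden for X₂, then T := P(ι₁)T₁ + P(ι₂)T₂ ∈ P(V₁ ⊕ V₂) has both T₁ and T₂ as restrictions, contradicting T ∈ X₁(V₁ ⊕ V₂) ∪ X₂(V₁ ⊕ V₂). -/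
variable {K : Type} [Field K]

/-- A (restriction-closed) subset of a generic representation `P`: a subset `X(V) ⊆ P(V)`
for each `V`, stable under all maps `P(φ)`. -/
structure RepSubset (P : GenRep K) where
  carrier : ∀ n : ℕ, Set (P.obj n)
  stable : ∀ {m n : ℕ} (φ : (Fin m → K) →ₗ[K] (Fin n → K)),
    ∀ x ∈ carrier m, P.map φ x ∈ carrier n

theorem GenRep.map_zero_apply (P : GenRep K) (h0 : ∀ x : P.obj 0, x = 0) {m n : ℕ}
    (y : P.obj m) : P.map (0 : (Fin m → K) →ₗ[K] (Fin n → K)) y = 0 := by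
  rw [← LinearMap.zero_comp (0 : (Fin m → K) →ₗ[K] (Fin 0 → K)), P.map_comp,
    LinearMap.comp_apply, h0 (P.map 0 y), map_zero]

theorem GenRep.map_map_add_map_eq (P : GenRep K) (h0 : ∀ x : P.obj 0, x = 0) {k l p : ℕ}
    {ι : (Fin k → K) →ₗ[K] (Fin p → K)} {ι' : (Fin l → K) →ₗ[K] (Fin p → K)}
    {π : (Fin p → K) →ₗ[K] (Fin k → K)} (hπι : π ∘ₗ ι = .id) (hπι' : π ∘ₗ ι' = 0)
    (x : P.obj k) (y : P.obj l) : P.map π (P.map ι x + P.map ι' y) = x := by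
  rw [map_add, ← LinearMap.comp_apply, ← P.map_comp, hπι, P.map_id, ← LinearMap.comp_apply,
    ← P.map_comp, hπι', P.map_zero_apply h0, add_zero, LinearMap.id_apply]

theorem GenRep.exists_map_fst_eq_and_map_snd_eq (P : GenRep K) (h0 : ∀ x : P.obj 0, x = 0)
    {m n p : ℕ} (e : ((Fin m → K) × (Fin n → K)) ≃ₗ[K] (Fin p → K)) (x : P.obj m)
    (y : P.obj n) :
    ∃ z : P.obj p, P.map (.fst K _ _ ∘ₗ e.symm.toLinearMap) z = x ∧
      P.map (.snd K _ _ ∘ₗ e.symm.toLinearMap) z = y := by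
  refine ⟨P.map (e.toLinearMap ∘ₗ .inl K _ _) x + P.map (e.toLinearMap ∘ₗ .inr K _ _) y,
    P.map_map_add_map_eq h0 ?_ ?_ x y, ?_⟩
  · ext; simp
  · ext; simp
  · rw [add_comm]
    refine P.map_map_add_map_eq h0 ?_ ?_ y x <;> ext <;> simp

theorem stmt19_general (K : Type) [Field K] (P : GenRep K)
    (h0 : ∀ x : P.obj 0, x = 0)
    (X₁ X₂ : RepSubset P)
    (hcover : ∀ n : ℕ, X₁.carrier n ∪ X₂.carrier n = Set.univ) :
    (∀ n : ℕ, X₁.carrier n = Set.univ) ∨ (∀ n : ℕ, X₂.carrier n = Set.univ) := by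
  simp only [Set.eq_univ_iff_forall]
  by_contra! ⟨⟨m, x, hx⟩, ⟨n, y, hy⟩⟩
  have e : ((Fin m → K) × (Fin n → K)) ≃ₗ[K] (Fin (m + n) → K) :=
    LinearEquiv.ofFinrankEq _ _ (by simp)
  obtain ⟨z, hzx, hzy⟩ := P.exists_map_fst_eq_and_map_snd_eq h0 e x y
  have hz : z ∈ X₁.carrier (m + n) ∪ X₂.carrier (m + n) := hcover (m + n) ▸ Set.mem_univ z
  rcases hz with hz | hz
  · exact hx (hzx ▸ X₁.stable _ z hz)
  · exact hy (hzy ▸ X₂.stable _ z hz)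

/-- If `P` is a polynomial generic representation over a finite field with `P(0) = 0`, then
the full subset `X := P` is irreducible: whenever `P = X₁ ∪ X₂` for restriction-closed
subsets `X₁, X₂`, one of them is all of `P`. -/
theorem stmt19 (K : Type) [Field K] [Fintype K] (P : GenRep K) (hP : P.IsPoly)
    (h0 : ∀ x : P.obj 0, x = 0)
    (X₁ X₂ : RepSubset P)
    (hcover : ∀ n : ℕ, X₁.carrier n ∪ X₂.carrier n = Set.univ) :
    (∀ n : ℕ, X₁.carrier n = Set.univ) ∨ (∀ n : ℕ, X₂.carrier n = Set.univ) :=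
  stmt19_general K P h0 X₁ X₂ hcover
end
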